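/- arXiv:1705.09342 — 4 statements merged into one kernel-verified Lean document; each statement's English description precedes it below -/
import Mathlib

section
/- If s(λ) solves (Aᵀ R⁻¹ A + λ² Q⁻¹) s = Aᵀ R⁻¹ d + λ² Q⁻¹ μ and x(λ) minimizes x ↦ (1/2)‖A Q x − b‖²_{R⁻¹} + (λ²/2)‖x‖²_Q with b = d − A μ, then s(λ) = μ + Q x(λ). -/
/-!
The minimiser `x` is a critical point of the Tikhonov functional, so its gradient
`(AQ)ᵀR⁻¹(AQx - b) + λ²Qx` vanishes. Cancelling `Q` and substituting `b = d - Aμ` shows that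
`μ + Qx` solves the normal equations, whose matrix `AᵀR⁻¹A + λ²Q⁻¹` is positive definite, so
that solution is `s`.
-/

open Matrix

theorem eq_zero_of_forall_quadratic_nonneg {a b : ℝ} (h : ∀ t : ℝ, 0 ≤ a * t ^ 2 + b * t) :
    b = 0 := by
  have hmin : IsLocalMin (fun t : ℝ => a * t ^ 2 + b * t) 0 :=
    Filter.Eventually.of_forall fun t => by simpa using h t
  have hderiv :=
    ((hasDerivAt_pow 2 (0 : ℝ)).const_mul a).add ((hasDerivAt_id' (0 : ℝ)).const_mul b)
  norm_num at hderiv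
  exact hmin.hasDerivAt_eq_zero hderiv

section Symmetric

variable {ι α : Type*} [Fintype ι] [CommRing α] {M : Matrix ι ι α}

theorem Matrix.IsSymm.dotProduct_mulVec_comm (hM : M.IsSymm) (u v : ι → α) :
    u ⬝ᵥ (M *ᵥ v) = v ⬝ᵥ (M *ᵥ u) := by
  rw [dotProduct_mulVec, ← mulVec_transpose, hM.eq, dotProduct_comm]

theorem Matrix.IsSymm.dotProduct_mulVec_add_smul (hM : M.IsSymm) (u v : ι → α) (t : α) :
    (u + t • v) ⬝ᵥ (M *ᵥ (u + t • v)) =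
      u ⬝ᵥ (M *ᵥ u) + 2 * t * (v ⬝ᵥ (M *ᵥ u)) + t ^ 2 * (v ⬝ᵥ (M *ᵥ v)) := by
  simp only [mulVec_add, mulVec_smul, dotProduct_add, add_dotProduct, dotProduct_smul,
    smul_dotProduct, smul_eq_mul, hM.dotProduct_mulVec_comm u v]
  ring

end Symmetric

def tikhonovGradient {ι κ α : Type*} [Fintype ι] [Fintype κ] [CommRing α] (B : Matrix κ ι α)
    (b : κ → α) (W : Matrix κ κ α) (P : Matrix ι ι α) (c : α) (y : ι → α) : ι → α :=
  Bᵀ *ᵥ (W *ᵥ (B *ᵥ y - b)) + c • (P *ᵥ y)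

noncomputable section Tikhonov

variable {ι κ : Type*} [Fintype ι] [Fintype κ]
  (B : Matrix κ ι ℝ) (b : κ → ℝ) (W : Matrix κ κ ℝ) (P : Matrix ι ι ℝ) (c : ℝ)

def tikhonovObjective (y : ι → ℝ) : ℝ :=
  (1/2) * ((B *ᵥ y - b) ⬝ᵥ (W *ᵥ (B *ᵥ y - b))) + (c/2) * (y ⬝ᵥ (P *ᵥ y))

variable {W P}

theorem tikhonovObjective_add_smul (hW : W.IsSymm) (hP : P.IsSymm) (x v : ι → ℝ) (t : ℝ) :
    tikhonovObjective B b W P c (x + t • v) =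
      tikhonovObjective B b W P c x + t * (tikhonovGradient B b W P c x ⬝ᵥ v) +
        t ^ 2 * tikhonovObjective B 0 W P c v := by
  have hres : B *ᵥ (x + t • v) - b = (B *ᵥ x - b) + t • (B *ᵥ v) := by
    rw [mulVec_add, mulVec_smul]; abel
  have hgrad : tikhonovGradient B b W P c x ⬝ᵥ v =
      (B *ᵥ v) ⬝ᵥ (W *ᵥ (B *ᵥ x - b)) + c * (v ⬝ᵥ (P *ᵥ x)) := by
    rw [tikhonovGradient, add_dotProduct, smul_dotProduct, smul_eq_mul, mulVec_transpose,
      ← dotProduct_mulVec, dotProduct_comm (W *ᵥ _), dotProduct_comm (P *ᵥ x)]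
  simp only [tikhonovObjective, hres, sub_zero, hgrad, hW.dotProduct_mulVec_add_smul,
    hP.dotProduct_mulVec_add_smul]
  ring

theorem tikhonovGradient_eq_zero_of_forall_le (hW : W.IsSymm) (hP : P.IsSymm) {x : ι → ℝ}
    (hx : ∀ y, tikhonovObjective B b W P c x ≤ tikhonovObjective B b W P c y) :
    tikhonovGradient B b W P c x = 0 := by
  refine dotProduct_eq_zero _ fun v => eq_zero_of_forall_quadratic_nonneg
    (a := tikhonovObjective B 0 W P c v) fun t => ?_
  have hmin := hx (x + t • v)
  rw [tikhonovObjective_add_smul B b c hW hP] at hmin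
  linarith

end Tikhonov

theorem normal_equations_of_tikhonovGradient_eq_zero {ι κ α : Type*} [Fintype ι] [Fintype κ]
    [DecidableEq ι] [CommRing α] (A : Matrix κ ι α) (W : Matrix κ κ α) {Q Q' : Matrix ι ι α}
    (hQ : Q.IsSymm) (hQ' : Q' * Q = 1) (c : α) (d : κ → α) (μ x : ι → α)
    (hx : tikhonovGradient (A * Q) (d - A *ᵥ μ) W Q c x = 0) :
    (Aᵀ * W * A + c • Q') *ᵥ (μ + Q *ᵥ x) = (Aᵀ * W) *ᵥ d + c • (Q' *ᵥ μ) := by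
  have hQQ (v : ι → α) : Q' *ᵥ (Q *ᵥ v) = v := by rw [mulVec_mulVec, hQ', one_mulVec]
  have hx' : Aᵀ *ᵥ (W *ᵥ (A *ᵥ (Q *ᵥ x) - (d - A *ᵥ μ))) + c • x = 0 := by
    have := congrArg (Q' *ᵥ ·) hx
    simpa only [tikhonovGradient, transpose_mul, hQ.eq, mulVec_add, mulVec_smul, mulVec_zero,
      ← mulVec_mulVec, hQQ] using this
  calc (Aᵀ * W * A + c • Q') *ᵥ (μ + Q *ᵥ x)
      = Aᵀ *ᵥ (W *ᵥ (A *ᵥ μ)) + Aᵀ *ᵥ (W *ᵥ (A *ᵥ (Q *ᵥ x))) + c • x + c • (Q' *ᵥ μ) := by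
        simp only [add_mulVec, smul_mulVec, mulVec_add, hQQ, ← mulVec_mulVec]
        module
    _ = (Aᵀ * W) *ᵥ d + c • (Q' *ᵥ μ) := by
        simp only [mulVec_sub, ← mulVec_mulVec] at hx' ⊢
        linear_combination (norm := module) hx'

/-- If `s(λ)` solves the normal equations
`(Aᵀ R⁻¹ A + λ² Q⁻¹) s = Aᵀ R⁻¹ d + λ² Q⁻¹ μ` and `x(λ)` minimizes
`x ↦ (1/2)‖A Q x − b‖²_{R⁻¹} + (λ²/2)‖x‖²_Q` with `b = d − A μ`, then
`s(λ) = μ + Q x(λ)`. -/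
theorem map_estimate_eq_mu_add_Q_x
    {m n : ℕ} (A : Matrix (Fin m) (Fin n) ℝ) (d : Fin m → ℝ) (μ : Fin n → ℝ)
    (l : ℝ) (hl : l ≠ 0)
    (R : Matrix (Fin m) (Fin m) ℝ) (hR : R.PosDef)
    (Q : Matrix (Fin n) (Fin n) ℝ) (hQ : Q.PosDef)
    (s x : Fin n → ℝ) (b : Fin m → ℝ) (hb : b = d - A *ᵥ μ)
    (hs : (Aᵀ * R⁻¹ * A + l^2 • Q⁻¹) *ᵥ s = (Aᵀ * R⁻¹) *ᵥ d + l^2 • (Q⁻¹ *ᵥ μ))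
    (hx : ∀ x' : Fin n → ℝ,
      (1/2) * (((A * Q) *ᵥ x - b) ⬝ᵥ (R⁻¹ *ᵥ ((A * Q) *ᵥ x - b)))
        + (l^2/2) * (x ⬝ᵥ (Q *ᵥ x))
      ≤ (1/2) * (((A * Q) *ᵥ x' - b) ⬝ᵥ (R⁻¹ *ᵥ ((A * Q) *ᵥ x' - b)))
        + (l^2/2) * (x' ⬝ᵥ (Q *ᵥ x'))) :
    s = μ + Q *ᵥ x := by
  have hRsymm : R⁻¹.IsSymm := isHermitian_iff_isSymm.1 hR.inv.isHermitian
  have hQsymm : Q.IsSymm := isHermitian_iff_isSymm.1 hQ.isHermitian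
  have hgrad := tikhonovGradient_eq_zero_of_forall_le (A * Q) b (l ^ 2) hRsymm hQsymm hx
  have hnormal : (Aᵀ * R⁻¹ * A + l ^ 2 • Q⁻¹).PosDef := by
    have hdata : (Aᵀ * R⁻¹ * A).PosSemidef := by
      simpa using hR.inv.posSemidef.conjTranspose_mul_mul_same A
    exact PosDef.posSemidef_add hdata (hQ.inv.smul (by positivity))
  refine mulVec_injective_iff_isUnit.2 hnormal.isUnit ?_
  rw [hs, normal_equations_of_tikhonovGradient_eq_zero A R⁻¹ hQsymm
    (nonsing_inv_mul Q ((isUnit_iff_isUnit_det Q).1 hQ.isUnit)) (l ^ 2) d μ x (hb ▸ hgrad)]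
end

section
/- The span of the gen-GK vectors v₁,…,v_k equals the Krylov subspace K_k(Aᵀ R⁻¹ A Q, Aᵀ R⁻¹ b) = span{Aᵀ R⁻¹ b, (Aᵀ R⁻¹ A Q)(Aᵀ R⁻¹ b), …, (Aᵀ R⁻¹ A Q)^{k−1}(Aᵀ R⁻¹ b)}. -/
/-!
With `B = Aᵀ R⁻¹` and `C = A Q`, the operator of the Krylov subspace is `B C`. The recurrences give
`B uᵢ ∈ span {v₀, …, vᵢ}` and hence `B C vᵢ = β_{i+1} α_{i+1} v_{i+1} + (an element of
span {v₀, …, vᵢ})`, while `v₀` is a nonzero multiple of `B b`. For any sequence with these two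
properties, induction on `k` shows that the span of its first `k` terms is the `k`-th Krylov
subspace: both spans grow by one vector, which the inductive hypothesis and the three-term relation
place in the other span.
-/

open Matrix Submodule Set

section Krylov

variable {K V : Type*} [DivisionRing K] [AddCommGroup V] [Module K V]

def krylovSubspace (f : Module.End K V) (w : V) (k : ℕ) : Submodule K V :=
  span K ((fun j => (f ^ j) w) '' Iio k)

theorem span_image_Iio_succ (v : ℕ → V) (k : ℕ) :
    span K (v '' Iio (k + 1)) = span K (v '' Iio k) ⊔ K ∙ v k := by
  rw [Iio_add_one_eq_Iic, ← Iio_insert, image_insert_eq, span_insert, sup_comm]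

theorem span_image_Iio_mono (v : ℕ → V) : Monotone fun k => span K (v '' Iio k) :=
  fun _ _ h => span_mono (image_mono (Iio_subset_Iio h))

theorem mem_span_image_Iio (v : ℕ → V) {i k : ℕ} (h : i < k) : v i ∈ span K (v '' Iio k) :=
  subset_span (mem_image_of_mem v h)

theorem krylovSubspace_succ (f : Module.End K V) (w : V) (k : ℕ) :
    krylovSubspace f w (k + 1) = krylovSubspace f w k ⊔ K ∙ (f ^ k) w :=
  span_image_Iio_succ _ k

theorem map_krylovSubspace_le (f : Module.End K V) (w : V) (k : ℕ) :
    (krylovSubspace f w k).map f ≤ krylovSubspace f w (k + 1) := by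
  rw [krylovSubspace, map_span, span_le, ← image_comp]
  rintro _ ⟨j, hj, rfl⟩
  refine subset_span ⟨j + 1, Nat.succ_lt_succ hj, ?_⟩
  simp only [pow_succ', Module.End.mul_apply, Function.comp_apply]

variable {f : Module.End K V} {v : ℕ → V} {c : ℕ → K}

theorem map_span_image_Iio_le
    (hstep : ∀ i, f (v i) - c (i + 1) • v (i + 1) ∈ span K (v '' Iio (i + 1))) (k : ℕ) :
    (span K (v '' Iio k)).map f ≤ span K (v '' Iio (k + 1)) := by
  rw [map_span, span_le, ← image_comp]
  rintro _ ⟨i, hi, rfl⟩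
  have hv : v (i + 1) ∈ span K (v '' Iio (k + 1)) := mem_span_image_Iio v (by simpa using hi)
  have hr := span_image_Iio_mono v (by simpa using hi.le : i + 1 ≤ k + 1) (hstep i)
  simpa using add_mem hr (smul_mem _ (c (i + 1)) hv)

theorem span_image_Iio_eq_krylovSubspace {w : V} (hc : ∀ i, c i ≠ 0) (h0 : c 0 • v 0 = w)
    (hstep : ∀ i, f (v i) - c (i + 1) • v (i + 1) ∈ span K (v '' Iio (i + 1))) (k : ℕ) :
    span K (v '' Iio k) = krylovSubspace f w k := by
  have hmono : ∀ i, krylovSubspace f w i ≤ krylovSubspace f w (i + 1) :=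
    fun i => span_image_Iio_mono (fun j => (f ^ j) w) i.le_succ
  suffices h : ∀ j, span K (v '' Iio (j + 1)) = krylovSubspace f w (j + 1) by
    cases k with
    | zero => simp [krylovSubspace]
    | succ k => exact h k
  intro j
  induction j with
  | zero =>
    rw [span_image_Iio_succ, krylovSubspace_succ, ← h0, pow_zero, Module.End.one_apply,
      span_singleton_smul_eq (hc 0).isUnit]
    simp [krylovSubspace]
  | succ j ih =>
    apply le_antisymm
    · have hfv : f (v j) ∈ krylovSubspace f w (j + 2) :=
        map_krylovSubspace_le f w (j + 1)
          (ih ▸ mem_map_of_mem (mem_span_image_Iio v j.lt_succ_self))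
      have hrem := hmono _ (ih ▸ hstep j)
      have hv : v (j + 1) = (c (j + 1))⁻¹ • (f (v j) - (f (v j) - c (j + 1) • v (j + 1))) := by
        rw [sub_sub_cancel, inv_smul_smul₀ (hc _)]
      rw [span_image_Iio_succ, sup_le_iff, span_singleton_le_iff_mem, hv]
      exact ⟨ih ▸ hmono _, smul_mem _ _ (sub_mem hfv hrem)⟩
    · have hfw : (f ^ (j + 1)) w ∈ span K (v '' Iio (j + 2)) := by
        rw [pow_succ', Module.End.mul_apply]
        exact map_span_image_Iio_le hstep (j + 1)
          (mem_map_of_mem (ih ▸ mem_span_image_Iio (fun j => (f ^ j) w) j.lt_succ_self))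
      rw [krylovSubspace_succ, sup_le_iff, span_singleton_le_iff_mem, ← ih]
      exact ⟨span_image_Iio_mono v (j + 1).le_succ, hfw⟩

end Krylov

namespace GolubKahan

variable {K V W : Type*} [DivisionRing K] [AddCommGroup V] [Module K V] [AddCommGroup W]
  [Module K W] {B : W →ₗ[K] V} {C : V →ₗ[K] W} {u : ℕ → W} {v : ℕ → V} {α β : ℕ → K}

theorem apply_u_mem_span (hv0 : α 0 • v 0 = B (u 0))
    (hv : ∀ i, α (i + 1) • v (i + 1) = B (u (i + 1)) - β (i + 1) • v i) (i : ℕ) :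
    B (u i) ∈ span K (v '' Iio (i + 1)) := by
  cases i with
  | zero => exact hv0 ▸ smul_mem _ _ (mem_span_image_Iio v zero_lt_one)
  | succ i =>
    rw [← eq_sub_iff_add_eq.mp (hv i)]
    exact add_mem (smul_mem _ _ (mem_span_image_Iio v i.succ.lt_succ_self))
      (smul_mem _ _ (mem_span_image_Iio v (i.lt_succ_self.trans i.succ.lt_succ_self)))

theorem comp_apply_v_sub_mem_span (hv0 : α 0 • v 0 = B (u 0))
    (hu : ∀ i, β (i + 1) • u (i + 1) = C (v i) - α i • u i)
    (hv : ∀ i, α (i + 1) • v (i + 1) = B (u (i + 1)) - β (i + 1) • v i) (i : ℕ) :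
    (B ∘ₗ C) (v i) - (β (i + 1) * α (i + 1)) • v (i + 1) ∈ span K (v '' Iio (i + 1)) := by
  have hCv : C (v i) = β (i + 1) • u (i + 1) + α i • u i := (eq_sub_iff_add_eq.mp (hu i)).symm
  have hBu : B (u (i + 1)) = α (i + 1) • v (i + 1) + β (i + 1) • v i :=
    (eq_sub_iff_add_eq.mp (hv i)).symm
  have h : (B ∘ₗ C) (v i) - (β (i + 1) * α (i + 1)) • v (i + 1) =
      (β (i + 1) * β (i + 1)) • v i + α i • B (u i) := by
    rw [LinearMap.comp_apply, hCv, map_add, map_smul, map_smul, hBu, smul_add, mul_smul, mul_smul]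
    abel
  rw [h]
  exact add_mem (smul_mem _ _ (mem_span_image_Iio v i.lt_succ_self))
    (smul_mem _ _ (apply_u_mem_span hv0 hv i))

theorem span_eq_krylovSubspace {b : W} (hα : ∀ i, α i ≠ 0) (hβ : ∀ i, β i ≠ 0)
    (hu0 : β 0 • u 0 = b) (hv0 : α 0 • v 0 = B (u 0))
    (hu : ∀ i, β (i + 1) • u (i + 1) = C (v i) - α i • u i)
    (hv : ∀ i, α (i + 1) • v (i + 1) = B (u (i + 1)) - β (i + 1) • v i) (k : ℕ) :
    span K (v '' Iio k) = krylovSubspace (B ∘ₗ C) (B b) k := by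
  refine span_image_Iio_eq_krylovSubspace (fun i => mul_ne_zero (hβ i) (hα i)) ?_
    (comp_apply_v_sub_mem_span hv0 hu hv) k
  rw [mul_smul, hv0, ← map_smul, hu0]

end GolubKahan

theorem range_fin_eq_image_Iio {X : Type*} (g : ℕ → X) (k : ℕ) :
    Set.range (fun i : Fin k => g i) = g '' Iio k := by
  rw [← Fin.range_val, ← range_comp]
  rfl

theorem genGK_krylov_span_general
    {m n : ℕ} (A : Matrix (Fin m) (Fin n) ℝ)
    (R : Matrix (Fin m) (Fin m) ℝ)
    (Q : Matrix (Fin n) (Fin n) ℝ)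
    (b : Fin m → ℝ)
    (u : ℕ → Fin m → ℝ) (v : ℕ → Fin n → ℝ) (α β : ℕ → ℝ)
    (hpos : ∀ i, 0 < α i ∧ 0 < β i)
    (hu0 : β 0 • u 0 = b)
    (hv0 : α 0 • v 0 = (Aᵀ * R⁻¹) *ᵥ u 0)
    (hu : ∀ i : ℕ, β (i + 1) • u (i + 1) = (A * Q) *ᵥ v i - α i • u i)
    (hv : ∀ i : ℕ, α (i + 1) • v (i + 1) = (Aᵀ * R⁻¹) *ᵥ u (i + 1) - β (i + 1) • v i)
    (k : ℕ) :
    Submodule.span ℝ (Set.range fun i : Fin k => v (i : ℕ)) =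
    Submodule.span ℝ (Set.range fun j : Fin k =>
      ((Aᵀ * R⁻¹ * A * Q) ^ (j : ℕ)) *ᵥ ((Aᵀ * R⁻¹) *ᵥ b)) := by
  have h := GolubKahan.span_eq_krylovSubspace (B := toLin' (Aᵀ * R⁻¹)) (C := toLin' (A * Q))
    (fun i => (hpos i).1.ne') (fun i => (hpos i).2.ne') hu0 hv0 hu hv k
  rw [← toLin'_mul, ← Matrix.mul_assoc] at h
  rw [range_fin_eq_image_Iio v, h, krylovSubspace,
    range_fin_eq_image_Iio fun j => ((Aᵀ * R⁻¹ * A * Q) ^ j) *ᵥ ((Aᵀ * R⁻¹) *ᵥ b)]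
  simp only [← toLin'_pow, toLin'_apply]

/-- The span of the gen-GK vectors `v₁, …, v_k` equals the Krylov subspace
`K_k(Aᵀ R⁻¹ A Q, Aᵀ R⁻¹ b)
  = span{Aᵀ R⁻¹ b, (Aᵀ R⁻¹ A Q)(Aᵀ R⁻¹ b), …, (Aᵀ R⁻¹ A Q)^{k−1}(Aᵀ R⁻¹ b)}`.
(Indexing is 0-based: `v 0 = v₁`.) -/
theorem genGK_krylov_span
    {m n : ℕ} (A : Matrix (Fin m) (Fin n) ℝ)
    (R : Matrix (Fin m) (Fin m) ℝ) (hR : R.PosDef)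
    (Q : Matrix (Fin n) (Fin n) ℝ) (hQ : Q.PosDef)
    (b : Fin m → ℝ)
    (u : ℕ → Fin m → ℝ) (v : ℕ → Fin n → ℝ) (α β : ℕ → ℝ)
    (hpos : ∀ i, 0 < α i ∧ 0 < β i)
    (hu0 : β 0 • u 0 = b)
    (hv0 : α 0 • v 0 = (Aᵀ * R⁻¹) *ᵥ u 0)
    (hu : ∀ i : ℕ, β (i + 1) • u (i + 1) = (A * Q) *ᵥ v i - α i • u i)
    (hv : ∀ i : ℕ, α (i + 1) • v (i + 1) = (Aᵀ * R⁻¹) *ᵥ u (i + 1) - β (i + 1) • v i)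
    (k : ℕ) :
    Submodule.span ℝ (Set.range fun i : Fin k => v (i : ℕ)) =
    Submodule.span ℝ (Set.range fun j : Fin k =>
      ((Aᵀ * R⁻¹ * A * Q) ^ (j : ℕ)) *ᵥ ((Aᵀ * R⁻¹) *ᵥ b)) :=
  genGK_krylov_span_general A R Q b u v α β hpos hu0 hv0 hu hv k
end

section
/- Let Γ_post = (λ² Q⁻¹ + H)⁻¹ with H = Aᵀ R⁻¹ A. If Q H Q = Z Θ Zᵀ exactly (with Θ diagonal, positive, and Zᵀ Q⁻¹ Z = I), then Γ_post = λ⁻² Q − Z Δ Zᵀ where Δ is diagonal with entries Δ_{ii} = λ⁻² θ_i/(θ_i + λ²). -/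
open Matrix

/-!
The factorisation gives `H = Q⁻¹ Z Θ Zᵀ Q⁻¹`. Multiplying `λ² Q⁻¹ + H` by the candidate
`λ⁻² Q − Z Δ Zᵀ` and collapsing `Zᵀ Q⁻¹ Z = I` leaves `I + Q⁻¹ Z (λ⁻² Θ − (λ² I + Θ) Δ) Zᵀ`,
and `Δ` is exactly the diagonal matrix that makes the middle factor vanish.
-/

namespace Matrix

variable {K : Type*} [Field K] {n k : Type*} [Fintype n] [DecidableEq n] [Fintype k]
  [DecidableEq k]

theorem eq_inv_mul_mul_inv_of_mul_mul_eq {Q H M : Matrix n n K} (hQ : IsUnit Q)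
    (h : Q * H * Q = M) : H = Q⁻¹ * M * Q⁻¹ := by
  have hdet := (isUnit_iff_isUnit_det Q).mp hQ
  rw [← h, Matrix.mul_assoc, Matrix.mul_assoc, mul_nonsing_inv _ hdet, Matrix.mul_one,
    ← Matrix.mul_assoc, nonsing_inv_mul _ hdet, Matrix.one_mul]

theorem inv_smul_inv_add_low_rank {c : K} (hc : c ≠ 0) {Q : Matrix n n K} (hQ : IsUnit Q)
    {Z : Matrix n k K} {Y : Matrix k n K} {D E : Matrix k k K} (hYZ : Y * Q⁻¹ * Z = 1)
    (hE : (c • 1 + D) * E = c⁻¹ • D) :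
    (c • Q⁻¹ + Q⁻¹ * (Z * D * Y) * Q⁻¹)⁻¹ = c⁻¹ • Q - Z * E * Y := by
  have hQQ : Q⁻¹ * Q = 1 := nonsing_inv_mul _ ((isUnit_iff_isUnit_det Q).mp hQ)
  have hYZ' (X : Matrix k n K) : Y * (Q⁻¹ * (Z * X)) = X := by
    rw [← Matrix.mul_assoc, ← Matrix.mul_assoc, hYZ, Matrix.one_mul]
  apply inv_eq_right_inv
  calc (c • Q⁻¹ + Q⁻¹ * (Z * D * Y) * Q⁻¹) * (c⁻¹ • Q - Z * E * Y)
      = 1 + Q⁻¹ * Z * (c⁻¹ • D - (c • 1 + D) * E) * Y := by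
        simp only [Matrix.add_mul, Matrix.mul_add, Matrix.mul_sub, Matrix.sub_mul,
          Matrix.smul_mul, Matrix.mul_smul, Matrix.mul_assoc, hQQ, hYZ', smul_add,
          smul_smul, inv_mul_cancel₀ hc, one_smul, Matrix.mul_one, Matrix.one_mul]
        abel
    _ = 1 := by rw [hE, sub_self, Matrix.mul_zero, Matrix.zero_mul, add_zero]

theorem smul_one_add_diagonal_mul_diagonal {c : K} {θ : k → K} (hθ : ∀ i, θ i + c ≠ 0) :
    (c • 1 + diagonal θ) * diagonal (fun i => c⁻¹ * (θ i / (θ i + c))) = c⁻¹ • diagonal θ := by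
  rw [smul_one_eq_diagonal, diagonal_add, diagonal_mul_diagonal, ← diagonal_smul]
  congr 1
  funext i
  rw [Pi.smul_apply, smul_eq_mul]
  field_simp [hθ i]
  ring

end Matrix

theorem posterior_covariance_low_rank_general
    {n k : ℕ}
    (Q : Matrix (Fin n) (Fin n) ℝ) (hQ : Q.PosDef)
    (l : ℝ) (hl : 0 < l)
    (H : Matrix (Fin n) (Fin n) ℝ)
    (Z : Matrix (Fin n) (Fin k) ℝ) (θ : Fin k → ℝ) (hθ : ∀ i, 0 < θ i)
    (hZorth : Zᵀ * Q⁻¹ * Z = (1 : Matrix (Fin k) (Fin k) ℝ))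
    (hfact : Q * H * Q = Z * Matrix.diagonal θ * Zᵀ) :
    (l^2 • Q⁻¹ + H)⁻¹ =
      l⁻¹ ^ 2 • Q - Z * Matrix.diagonal (fun i => l⁻¹ ^ 2 * (θ i / (θ i + l^2))) * Zᵀ := by
  rw [eq_inv_mul_mul_inv_of_mul_mul_eq hQ.isUnit hfact, inv_pow]
  exact inv_smul_inv_add_low_rank (pow_ne_zero 2 hl.ne') hQ.isUnit hZorth
    (smul_one_add_diagonal_mul_diagonal fun i => (add_pos (hθ i) (pow_pos hl 2)).ne')

/-- Let `Γ_post = (λ² Q⁻¹ + H)⁻¹` with `H = Aᵀ R⁻¹ A`. If `Q H Q = Z Θ Zᵀ`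
exactly (with `Θ` diagonal, positive, and `Zᵀ Q⁻¹ Z = I`), then
`Γ_post = λ⁻² Q − Z Δ Zᵀ` where `Δ` is diagonal with entries
`Δ_{ii} = λ⁻² θ_i/(θ_i + λ²)`. -/
theorem posterior_covariance_low_rank
    {m n k : ℕ} (A : Matrix (Fin m) (Fin n) ℝ)
    (R : Matrix (Fin m) (Fin m) ℝ) (hR : R.PosDef)
    (Q : Matrix (Fin n) (Fin n) ℝ) (hQ : Q.PosDef)
    (l : ℝ) (hl : 0 < l)
    (H : Matrix (Fin n) (Fin n) ℝ) (hH : H = Aᵀ * R⁻¹ * A)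
    (Z : Matrix (Fin n) (Fin k) ℝ) (θ : Fin k → ℝ) (hθ : ∀ i, 0 < θ i)
    (hZorth : Zᵀ * Q⁻¹ * Z = (1 : Matrix (Fin k) (Fin k) ℝ))
    (hfact : Q * H * Q = Z * Matrix.diagonal θ * Zᵀ) :
    (l^2 • Q⁻¹ + H)⁻¹ =
      l⁻¹ ^ 2 • Q - Z * Matrix.diagonal (fun i => l⁻¹ ^ 2 * (θ i / (θ i + l^2))) * Zᵀ :=
  posterior_covariance_low_rank_general Q hQ l hl H Z θ hθ hZorth hfact
end

section
/- The Woodbury-type identity Q(λ² Q + Z Θ Zᵀ)⁻¹ Q = λ⁻² Q − λ⁻² Z (I + λ² Θ⁻¹)⁻¹ Zᵀ holds whenever Zᵀ Q⁻¹ Z = I and Θ is diagonal with positive entries. -/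
open Matrix

/-! Apply the Woodbury identity to `λ² Q + Z Θ Zᵀ`: the normalization `Zᵀ Q⁻¹ Z = I`
collapses the capacitance matrix `Θ⁻¹ + Zᵀ (λ² Q)⁻¹ Z` to `λ⁻² (I + λ² Θ⁻¹)`, and
conjugating the resulting inverse by `Q` cancels the remaining factors `Q⁻¹`. -/

namespace Matrix

variable {K : Type*} [Field K] {n m : Type*} [Fintype n] [DecidableEq n] [Fintype m]
  [DecidableEq m]

theorem inv_smul_of_ne_zero (A : Matrix n n K) {c : K} (hc : c ≠ 0) (hA : IsUnit A) :
    (c • A)⁻¹ = c⁻¹ • A⁻¹ := by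
  have := invertibleOfNonzero hc
  rw [inv_smul A c ((isUnit_iff_isUnit_det A).mp hA), invOf_eq_inv]

theorem mul_inv_smul_add_mul_mul_mul (Q : Matrix n n K) (hQ : IsUnit Q) {c : K} (hc : c ≠ 0)
    (U : Matrix n m K) (C : Matrix m m K) (V : Matrix m n K) (hC : IsUnit C)
    (hcC : IsUnit (1 + c • C⁻¹)) (hVU : V * Q⁻¹ * U = 1) :
    Q * (c • Q + U * C * V)⁻¹ * Q = c⁻¹ • Q - c⁻¹ • (U * (1 + c • C⁻¹)⁻¹ * V) := by
  have hcQ : (c • Q)⁻¹ = c⁻¹ • Q⁻¹ := Q.inv_smul_of_ne_zero hc hQ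
  have hcapacitance : C⁻¹ + V * (c • Q)⁻¹ * U = c⁻¹ • (1 + c • C⁻¹) := by
    rw [hcQ, Matrix.mul_smul, Matrix.smul_mul, hVU, smul_add, smul_smul, inv_mul_cancel₀ hc,
      one_smul, add_comm]
  have hcapacitance_inv : (c⁻¹ • (1 + c • C⁻¹))⁻¹ = c • (1 + c • C⁻¹)⁻¹ := by
    rw [inv_smul_of_ne_zero _ (inv_ne_zero hc) hcC, inv_inv]
  have hcQ_unit : IsUnit (c • Q) := by simpa [Units.smul_def] using hQ.smul (Units.mk0 c hc)
  have hcapacitance_unit : IsUnit (c⁻¹ • (1 + c • C⁻¹)) := by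
    simpa [Units.smul_def] using hcC.smul (Units.mk0 c hc)⁻¹
  rw [add_mul_mul_inv_eq_sub _ _ _ _ hcQ_unit hC (hcapacitance ▸ hcapacitance_unit),
    hcapacitance, hcapacitance_inv, hcQ]
  have hQdet := (isUnit_iff_isUnit_det Q).mp hQ
  simp only [Matrix.mul_sub, Matrix.sub_mul, Matrix.mul_smul, Matrix.smul_mul, smul_smul,
    Matrix.mul_assoc, mul_nonsing_inv_cancel_left _ _ hQdet, nonsing_inv_mul _ hQdet,
    Matrix.mul_one, mul_inv_cancel₀ hc, mul_one]

theorem isUnit_one_add_smul_inv_diagonal [LinearOrder K] [IsStrictOrderedRing K]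
    {c : K} (hc : 0 ≤ c) {θ : m → K} (hθ : ∀ i, 0 < θ i) :
    IsUnit (1 + c • (diagonal θ)⁻¹) := by
  have hθinv : (diagonal θ)⁻¹ = diagonal θ⁻¹ :=
    inv_eq_left_inv (by simp [diagonal_mul_diagonal, fun i => (hθ i).ne'])
  rw [hθinv, ← diagonal_smul, ← diagonal_one, diagonal_add, isUnit_diagonal, Pi.isUnit_iff]
  intro i
  exact isUnit_iff_ne_zero.mpr
    (add_pos_of_pos_of_nonneg one_pos (mul_nonneg hc (inv_nonneg.mpr (hθ i).le))).ne'

end Matrix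

/-- The Woodbury-type identity
`Q(λ² Q + Z Θ Zᵀ)⁻¹ Q = λ⁻² Q − λ⁻² Z (I + λ² Θ⁻¹)⁻¹ Zᵀ`
holds whenever `Zᵀ Q⁻¹ Z = I` and `Θ` is diagonal with positive entries. -/
theorem woodbury_identity_genGK
    {n k : ℕ} (Q : Matrix (Fin n) (Fin n) ℝ) (hQ : Q.PosDef)
    (l : ℝ) (hl : l ≠ 0)
    (Z : Matrix (Fin n) (Fin k) ℝ) (θ : Fin k → ℝ) (hθ : ∀ i, 0 < θ i)
    (hZorth : Zᵀ * Q⁻¹ * Z = (1 : Matrix (Fin k) (Fin k) ℝ)) :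
    Q * (l^2 • Q + Z * Matrix.diagonal θ * Zᵀ)⁻¹ * Q =
      l⁻¹ ^ 2 • Q -
        l⁻¹ ^ 2 • (Z * ((1 : Matrix (Fin k) (Fin k) ℝ)
          + l^2 • (Matrix.diagonal θ)⁻¹)⁻¹ * Zᵀ) := by
  have hΘ : IsUnit (diagonal θ) :=
    isUnit_diagonal.mpr (Pi.isUnit_iff.mpr fun i => (hθ i).ne'.isUnit)
  rw [inv_pow]
  exact mul_inv_smul_add_mul_mul_mul Q hQ.isUnit (pow_ne_zero 2 hl) Z (diagonal θ) Zᵀ hΘ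
    (isUnit_one_add_smul_inv_diagonal (sq_nonneg l) hθ) hZorth
end
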